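/- arXiv:1002.4770 — 6 statements merged into one kernel-verified Lean document; each statement's English description precedes it below -/
import Mathlib

section
/- For every integer x with ⌈m⌉ ≤ x ≤ min(n, R): P(X ≥ x)·P(X = ⌈m⌉) ≤ P(X = x); that is, P(X ≥ x) ≤ P(X = x)/P(X = ⌈m⌉). -/
/-!
The hypergeometric pmf `p` is log-concave: it is a product of two sequences of binomial
coefficients, `k ↦ C(R, k)` and `k ↦ C(N - R, n - k)`, each log-concave without internal zeros.
Pushing two indices towards each other therefore never decreases a product of its values, so for
`c ≤ x ≤ k` we get `p(k) p(c) ≤ p(x) p(c + k - x)`. Summing over `k ≥ x` bounds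
`P(X ≥ x) p(c)` by `p(x)` times the total mass, which is at most `1` by Vandermonde's identity.
-/

/-- The hypergeometric probability mass function:
`P(X = k) = C(R,k)·C(N−R, n−k)/C(N,n)`, where binomial coefficients are `0`
outside their natural range (so the pmf vanishes for `k < 0` and `k > n`). -/
noncomputable def hypPMF (N R n : ℕ) (k : ℤ) : ℝ :=
  if 0 ≤ k ∧ k ≤ (n : ℤ) then
    ((R.choose k.toNat : ℝ) * ((N - R).choose (n - k.toNat) : ℝ)) / (N.choose n : ℝ)
  else 0

/-- Bernoulli Kullback–Leibler divergence, with the convention `0·log 0 = 0`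
(automatic since `Real.log 0 = 0`). -/
noncomputable def bernKL (u p : ℝ) : ℝ :=
  u * Real.log (u / p) + (1 - u) * Real.log ((1 - u) / (1 - p))

/-- The log-likelihood-ratio functional
`L(x) = n·(p̂ log(p̂/p̄) + (1−p̂) log((1−p̂)/(1−p̄))) + (N−n)·(q̂ log(q̂/p̄) + (1−q̂) log((1−q̂)/(1−p̄)))`
with `p̄ = R/N`, `p̂ = x/n`, `q̂ = (R−x)/(N−n)`. -/
noncomputable def Lfun (N R n : ℕ) (x : ℝ) : ℝ :=
  (n : ℝ) * bernKL (x / n) ((R : ℝ) / N) +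
    ((N : ℝ) - n) * bernKL (((R : ℝ) - x) / ((N : ℝ) - n)) ((R : ℝ) / N)

/-- The constant `C = 2·exp((13/(12·p̄·(1−p̄)))·(1/n + 1/(N−n)))` with `p̄ = R/N`. -/
noncomputable def Cconst (N R n : ℕ) : ℝ :=
  2 * Real.exp (13 / (12 * ((R : ℝ) / N) * (1 - (R : ℝ) / N)) * (1 / (n : ℝ) + 1 / ((N : ℝ) - n)))

open Finset

theorem Nat.choose_mul_choose_succ_le (M : ℕ) {a b : ℕ} (h : a ≤ b) :
    M.choose a * M.choose (b + 1) ≤ M.choose (a + 1) * M.choose b := by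
  refine Nat.le_of_mul_le_mul_right ?_ (Nat.mul_pos a.succ_pos b.succ_pos)
  have key : (a + 1) * (M - b) ≤ (b + 1) * (M - a) := Nat.mul_le_mul (by omega) (by omega)
  calc M.choose a * M.choose (b + 1) * ((a + 1) * (b + 1))
      = M.choose a * (a + 1) * (M.choose (b + 1) * (b + 1)) := by ring
    _ = M.choose a * M.choose b * ((a + 1) * (M - b)) := by
        rw [Nat.choose_succ_right_eq]; ring
    _ ≤ M.choose a * M.choose b * ((b + 1) * (M - a)) := Nat.mul_le_mul_left _ key
    _ = M.choose a * (M - a) * M.choose b * (b + 1) := by ring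
    _ = M.choose (a + 1) * M.choose b * ((a + 1) * (b + 1)) := by
        rw [← Nat.choose_succ_right_eq]; ring

/-- For nonnegative sequences this is log-concavity, `f (k - 1) * f (k + 1) ≤ f k ^ 2`, together
with the absence of internal zeros. -/
def LogConcave (f : ℤ → ℝ) : Prop :=
  ∀ a b, a < b → f a * f b ≤ f (a + 1) * f (b - 1)

namespace LogConcave

variable {f g : ℤ → ℝ}

theorem mul_le_mul_shift (hf : LogConcave f) {j : ℤ} (hj : 0 ≤ j) :
    ∀ {a b : ℤ}, a + j ≤ b → f a * f (b + j) ≤ f (a + j) * f b := by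
  induction j, hj using Int.leInduction with
  | base => simp
  | succ j _ ih =>
    intro a b h
    calc f a * f (b + (j + 1))
        ≤ f (a + 1) * f (b + j) := by
          simpa only [show b + (j + 1) - 1 = b + j by ring] using hf a (b + (j + 1)) (by omega)
      _ ≤ f (a + (j + 1)) * f b := by
          simpa only [show a + 1 + j = a + (j + 1) by ring] using ih (a := a + 1) (by omega)

theorem mul_le_mul_inward (hf : LogConcave f) {c x k : ℤ} (hcx : c ≤ x) (hxk : x ≤ k) :
    f k * f c ≤ f x * f (c + k - x) := by
  rcases le_total x (c + k - x) with h | h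
  · have := hf.mul_le_mul_shift (sub_nonneg.mpr hcx) (a := c) (b := c + k - x) (by omega)
    rw [show c + k - x + (x - c) = k by ring, show c + (x - c) = x by ring] at this
    linarith [mul_comm (f c) (f k)]
  · have := hf.mul_le_mul_shift (sub_nonneg.mpr hxk) (a := c) (b := x) (by omega)
    rw [show x + (k - x) = k by ring, show c + (k - x) = c + k - x by ring] at this
    linarith [mul_comm (f c) (f k), mul_comm (f x) (f (c + k - x))]

theorem comp_sub (hf : LogConcave f) (n : ℤ) : LogConcave (fun k ↦ f (n - k)) := by
  intro a b hab
  have := hf (n - b) (n - a) (by omega)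
  rw [show n - b + 1 = n - (b - 1) by ring, show n - a - 1 = n - (a + 1) by ring] at this
  linarith [mul_comm (f (n - a)) (f (n - b)), mul_comm (f (n - (a + 1))) (f (n - (b - 1)))]

theorem mul (hf : LogConcave f) (hg : LogConcave g) (hf0 : 0 ≤ f) (hg0 : 0 ≤ g) :
    LogConcave (f * g) := by
  intro a b hab
  calc (f * g) a * (f * g) b = (f a * f b) * (g a * g b) := by simp only [Pi.mul_apply]; ring
    _ ≤ (f (a + 1) * f (b - 1)) * (g (a + 1) * g (b - 1)) :=
        mul_le_mul (hf a b hab) (hg a b hab) (mul_nonneg (hg0 a) (hg0 b))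
          (mul_nonneg (hf0 _) (hf0 _))
    _ = (f * g) (a + 1) * (f * g) (b - 1) := by simp only [Pi.mul_apply]; ring

theorem div_const (hf : LogConcave f) (d : ℝ) : LogConcave (fun k ↦ f k / d) := by
  intro a b hab
  simp only [div_mul_div_comm]
  exact div_le_div_of_nonneg_right (hf a b hab) (mul_self_nonneg d)

theorem tsum_indicator_mul_le (hf : LogConcave f) (hf0 : 0 ≤ f) (hfs : Summable f) {c x : ℤ}
    (hcx : c ≤ x) :
    (∑' k, {j | x ≤ j}.indicator f k) * f c ≤ f x * ∑' k, f k := by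
  have hshift : ∑' k, f (c + k - x) = ∑' k, f k := by
    simpa [Equiv.coe_addRight, add_sub_assoc', add_comm] using (Equiv.addRight (c - x)).tsum_eq f
  have hshift_summable : Summable fun k ↦ f (c + k - x) := by
    simpa [Function.comp_def, add_sub_assoc', add_comm] using
      (Equiv.addRight (c - x)).summable_iff.mpr hfs
  rw [← tsum_mul_right, ← hshift, ← tsum_mul_left]
  refine Summable.tsum_le_tsum (fun k ↦ ?_) ((hfs.indicator _).mul_right _)
    (hshift_summable.mul_left _)
  by_cases hk : x ≤ k
  · simpa [Set.indicator_of_mem, hk] using hf.mul_le_mul_inward hcx hk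
  · simpa [Set.indicator_of_notMem, hk] using mul_nonneg (hf0 x) (hf0 _)

end LogConcave

def intChoose (M : ℕ) (k : ℤ) : ℝ :=
  if 0 ≤ k then M.choose k.toNat else 0

theorem intChoose_nonneg (M : ℕ) : 0 ≤ intChoose M := fun k ↦ by
  unfold intChoose; split_ifs <;> positivity

theorem logConcave_intChoose (M : ℕ) : LogConcave (intChoose M) := by
  intro a b hab
  rcases lt_or_ge a 0 with ha | ha
  · simpa [intChoose, ha.not_ge] using
      mul_nonneg (intChoose_nonneg M (a + 1)) (intChoose_nonneg M (b - 1))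
  lift a to ℕ using ha
  obtain ⟨b, rfl⟩ : ∃ b' : ℕ, b = b' + 1 := ⟨(b - 1).toNat, by omega⟩
  simp only [intChoose, add_sub_cancel_right]
  rw [if_pos (by omega), if_pos (by omega), if_pos (by omega), if_pos (by omega)]
  exact_mod_cast Nat.choose_mul_choose_succ_le M (a := a) (b := b) (by omega)

theorem hypPMF_eq_intChoose (N R n : ℕ) (k : ℤ) :
    hypPMF N R n k = intChoose R k * intChoose (N - R) (n - k) / N.choose n := by
  unfold hypPMF intChoose
  by_cases hk0 : 0 ≤ k
  · by_cases hkn : k ≤ n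
    · rw [if_pos ⟨hk0, hkn⟩, if_pos hk0, if_pos (by omega),
        show ((n : ℤ) - k).toNat = n - k.toNat by omega]
    · simp [hk0, hkn]
  · simp [hk0]

theorem hypPMF_nonneg (N R n : ℕ) : 0 ≤ hypPMF N R n := fun k ↦ by
  rw [hypPMF_eq_intChoose]
  exact div_nonneg (mul_nonneg (intChoose_nonneg R k) (intChoose_nonneg _ _)) (Nat.cast_nonneg _)

theorem logConcave_hypPMF (N R n : ℕ) : LogConcave (hypPMF N R n) := by
  rw [funext (hypPMF_eq_intChoose N R n)]
  exact ((logConcave_intChoose R).mul ((logConcave_intChoose (N - R)).comp_sub n)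
    (intChoose_nonneg R) fun k ↦ intChoose_nonneg (N - R) (n - k)).div_const _

theorem hypPMF_eq_zero_of_notMem (N R n : ℕ) {k : ℤ}
    (hk : k ∉ (range (n + 1)).map Nat.castEmbedding) : hypPMF N R n k = 0 :=
  if_neg fun ⟨h0, hn⟩ ↦ hk (mem_map.mpr ⟨k.toNat, mem_range.mpr (by omega), by simp [h0]⟩)

theorem summable_hypPMF (N R n : ℕ) : Summable (hypPMF N R n) :=
  summable_of_ne_finset_zero fun _ ↦ hypPMF_eq_zero_of_notMem N R n

theorem tsum_hypPMF_le_one {N R : ℕ} (n : ℕ) (hRN : R ≤ N) : ∑' k, hypPMF N R n k ≤ 1 := by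
  have vandermonde : ∑ j ∈ range (n + 1), (R.choose j * (N - R).choose (n - j) : ℝ)
      = N.choose n := by
    have := Nat.add_choose_eq R (N - R) n
    rw [Nat.add_sub_cancel' hRN, Nat.sum_antidiagonal_eq_sum_range_succ_mk] at this
    exact_mod_cast this.symm
  rw [tsum_eq_sum fun _ ↦ hypPMF_eq_zero_of_notMem N R n, sum_map]
  calc ∑ j ∈ range (n + 1), hypPMF N R n (Nat.castEmbedding j)
      = ∑ j ∈ range (n + 1), (R.choose j * (N - R).choose (n - j) : ℝ) / N.choose n :=
        sum_congr rfl fun j hj ↦ by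
          rw [Nat.castEmbedding_apply, hypPMF, if_pos ⟨j.cast_nonneg, by
            simpa [Nat.lt_succ_iff] using hj⟩, Int.toNat_natCast]
    _ = N.choose n / N.choose n := by rw [← sum_div, vandermonde]
    _ ≤ 1 := div_self_le_one _

theorem hypergeometric_tail_le_mode_ratio_general (N R n : ℕ) (hRN : R < N) (x : ℤ)
    (hxm : ⌈(n : ℝ) * R / N⌉ ≤ x) :
    (∑' k : ℤ, Set.indicator {j : ℤ | x ≤ j} (hypPMF N R n) k) *
        hypPMF N R n ⌈(n : ℝ) * R / N⌉ ≤
      hypPMF N R n x :=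
  calc _ ≤ hypPMF N R n x * ∑' k, hypPMF N R n k :=
        (logConcave_hypPMF N R n).tsum_indicator_mul_le (hypPMF_nonneg N R n)
          (summable_hypPMF N R n) hxm
    _ ≤ hypPMF N R n x :=
        mul_le_of_le_one_right (hypPMF_nonneg N R n x) (tsum_hypPMF_le_one n hRN.le)

/-- For every integer `x` with `⌈m⌉ ≤ x ≤ min(n, R)` where `m = nR/N`:
`P(X ≥ x)·P(X = ⌈m⌉) ≤ P(X = x)`, i.e. `P(X ≥ x) ≤ P(X = x)/P(X = ⌈m⌉)`. -/
theorem hypergeometric_tail_le_mode_ratio (N R n : ℕ) (hR1 : 1 ≤ R) (hRN : R < N)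
    (hn1 : 1 ≤ n) (hnN : n < N) (x : ℤ)
    (hxm : ⌈(n : ℝ) * R / N⌉ ≤ x) (hx : x ≤ min (n : ℤ) (R : ℤ)) :
    (∑' k : ℤ, Set.indicator {j : ℤ | x ≤ j} (hypPMF N R n) k) *
        hypPMF N R n ⌈(n : ℝ) * R / N⌉ ≤
      hypPMF N R n x :=
  hypergeometric_tail_le_mode_ratio_general N R n hRN x hxm
end

section
/- For every integer x with ⌈m⌉ ≤ x < min(n, R): log P(X = x) − log P(X = ⌈m⌉) ≤ −L(x) + L(⌈m⌉) + (1/2)·log( (⌈m⌉·(R−⌈m⌉)·(n−⌈m⌉)·(N−R−n+⌈m⌉)) / (x·(R−x)·(n−x)·(N−R−n+x)) ) + (1/(12·p̄·(1−p̄)))·(1/n + 1/(N−n)). -/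
/-!
Written with factorials, `P(X = k)` depends on `k` only through the four cells
`k, R - k, n - k, N - R - n + k` of the 2×2 table with margins `R`, `n` and total `N`. Stirling's
formula with remainder `r(j)` turns `log P(X = k)` into a constant minus `L(k)`, half the log of
the product of the cells, and the sum of the four remainders. As `0 ≤ r(j) ≤ 1/(12j)` and `r`
decreases, the remainder sum at `x` falls short of the one at `b = ⌈m⌉` by at most
`r(b) + r(N - R - n + b) ≤ N/(12nR) + N/(12(N - R)(N - n))`, because `b ≥ nR/N` and
`N - R - n + b ≥ (N - R)(N - n)/N`; this is at most the stated constant.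
-/

open Real Filter Topology
open scoped Nat

/-- The remainder in Stirling's formula `log j! = j log j - j + ½ log (2πj) + stirlingRem j`. -/
noncomputable def stirlingRem (j : ℕ) : ℝ :=
  log (Stirling.stirlingSeq j) - log √π

lemma log_factorial_eq_add_stirlingRem {j : ℕ} (hj : j ≠ 0) :
    log j ! = j * log j - j + (log (2 * π) + log j) / 2 + stirlingRem j := by
  have hj0 : (0 : ℝ) < j := by positivity
  rw [stirlingRem, Stirling.log_stirlingSeq_formula, log_div hj0.ne' (exp_pos 1).ne', log_exp,
    log_mul two_ne_zero hj0.ne', log_mul two_ne_zero pi_pos.ne', log_sqrt pi_pos.le]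
  ring

lemma stirlingRem_nonneg {j : ℕ} (hj : j ≠ 0) : 0 ≤ stirlingRem j :=
  sub_nonneg.2 <| log_le_log (by positivity) (Stirling.sqrt_pi_le_stirlingSeq hj)

lemma stirlingRem_le_of_le {i j : ℕ} (hi : i ≠ 0) (hij : i ≤ j) :
    stirlingRem j ≤ stirlingRem i := by
  obtain ⟨i, rfl⟩ := Nat.exists_eq_succ_of_ne_zero hi
  obtain ⟨j, rfl⟩ := Nat.exists_eq_add_of_le hij
  rw [Nat.succ_add]
  exact sub_le_sub_right (Stirling.log_stirlingSeq'_antitone (Nat.le_add_right i j)) _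

/-- Robbins' bound, obtained by telescoping `Stirling.log_stirlingSeq_sdiff_le`: the sequence
`log (stirlingSeq j) - 1 / (12 j)` increases to `log √π`. -/
lemma stirlingRem_le {j : ℕ} (hj : j ≠ 0) : stirlingRem j ≤ 1 / (12 * j) := by
  set g : ℕ → ℝ := fun k ↦ log (Stirling.stirlingSeq (k + 1)) - 1 / (12 * (k + 1 : ℕ))
  have hg : Monotone g := by
    refine monotone_nat_of_le_succ fun k ↦ ?_
    have h := Stirling.log_stirlingSeq_sdiff_le (k + 1)
    have hsplit : (1 : ℝ) / (12 * (k + 1 : ℕ) * ((k + 1 : ℕ) + 1)) =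
        1 / (12 * (k + 1 : ℕ)) - 1 / (12 * (k + 1 + 1 : ℕ)) := by
      push_cast; field_simp; ring
    simp only [g]
    linarith
  have hlim : Tendsto g atTop (𝓝 (log √π - 0)) := by
    refine Tendsto.sub ?_ ?_
    · exact ((continuousAt_log (by positivity)).tendsto).comp
        (Stirling.tendsto_stirlingSeq_sqrt_pi.comp (tendsto_add_atTop_nat 1))
    · simp only [one_div]
      exact tendsto_inv_atTop_zero.comp <| (tendsto_natCast_atTop_atTop.comp
        (tendsto_add_atTop_nat 1)).const_mul_atTop (by norm_num)
  obtain ⟨k, rfl⟩ := Nat.exists_eq_succ_of_ne_zero hj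
  have hk := hg.ge_of_tendsto hlim k
  simp only [g, sub_zero] at hk
  rw [stirlingRem]
  linarith

lemma log_choose_eq {m k : ℕ} (h : k ≤ m) :
    log (m.choose k) = log m ! - log k ! - log (m - k)! := by
  rw [Nat.cast_choose ℝ h, log_div (by positivity) (by positivity),
    log_mul (by positivity) (by positivity)]
  ring

lemma log_hypPMF_eq {N R n k : ℕ} (hkR : k ≤ R) (hkn : k ≤ n) (hRN : R ≤ N) (hnN : n ≤ N)
    (hRnk : R + n ≤ N + k) :
    log (hypPMF N R n k) = log R ! + log (N - R)! + log n ! + log (N - n)! - log N ! -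
      (log k ! + log (R - k)! + log (n - k)! + log (N + k - R - n)!) := by
  have hchoose {m j : ℕ} (h : j ≤ m) : (m.choose j : ℝ) ≠ 0 := by
    exact_mod_cast (Nat.choose_pos h).ne'
  rw [hypPMF, if_pos ⟨by positivity, by exact_mod_cast hkn⟩, Int.toNat_natCast,
    log_div (mul_ne_zero (hchoose hkR) (hchoose (by omega))) (hchoose hnN),
    log_mul (hchoose hkR) (hchoose (by omega)), log_choose_eq hkR, log_choose_eq hnN,
    log_choose_eq (by omega : n - k ≤ N - R), show N - R - (n - k) = N + k - R - n by omega]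
  ring

lemma mul_bernKL_div {u m p : ℝ} (hu : 0 < u) (hum : u < m) (hp0 : 0 < p) (hp1 : p < 1) :
    m * bernKL (u / m) p =
      u * log u + (m - u) * log (m - u) - m * log m - (u * log p + (m - u) * log (1 - p)) := by
  have hm : 0 < m := hu.trans hum
  have hmu : 0 < m - u := sub_pos.2 hum
  have hp1' : 0 < 1 - p := sub_pos.2 hp1
  rw [bernKL, one_sub_div hm.ne', log_div (by positivity) hp0.ne', log_div hu.ne' hm.ne',
    log_div (by positivity) hp1'.ne', log_div hmu.ne' hm.ne']
  field_simp
  ring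

lemma Lfun_eq {N R n : ℕ} {x : ℝ} (hx : 0 < x) (hxR : x < R) (hxn : x < n) (hRN : R < N)
    (hnN : n < N) (hx' : 0 < (N : ℝ) - R - n + x) :
    Lfun N R n x = x * log x + (R - x) * log (R - x) + (n - x) * log (n - x) +
      (N - R - n + x) * log (N - R - n + x) -
      (R * log R + (N - R) * log (N - R) + n * log n + (N - n) * log (N - n) - N * log N) := by
  have hR : (0 : ℝ) < R := hx.trans hxR
  have hRN' : (R : ℝ) < N := by exact_mod_cast hRN
  have hN : (0 : ℝ) < N := hR.trans hRN'
  have hnN' : (n : ℝ) < N := by exact_mod_cast hnN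
  have hp1 : (R : ℝ) / N < 1 := (div_lt_one hN).2 hRN'
  rw [Lfun, mul_bernKL_div hx hxn (by positivity) hp1,
    mul_bernKL_div (by linarith) (by linarith) (by positivity) hp1, one_sub_div hN.ne',
    log_div hR.ne' hN.ne', log_div (by linarith) hN.ne',
    show (N : ℝ) - n - (R - x) = N - R - n + x by ring]
  ring

/-- The product of the four cells `k, R - k, n - k, N - R - n + k` of the 2×2 table with
margins `R`, `n` and total `N`. -/
noncomputable def cellProd (N R n : ℕ) (x : ℝ) : ℝ :=
  x * ((R : ℝ) - x) * ((n : ℝ) - x) * ((N : ℝ) - R - n + x)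

noncomputable def cellStirlingRem (N R n k : ℕ) : ℝ :=
  stirlingRem k + stirlingRem (R - k) + stirlingRem (n - k) + stirlingRem (N + k - R - n)

lemma cellProd_factors_pos {N R n k : ℕ} (hkR : k < R) (hkn : k < n) (hRnk : R + n < N + k) :
    (0 : ℝ) < R - k ∧ (0 : ℝ) < n - k ∧ (0 : ℝ) < N - R - n + k := by
  have : (R : ℝ) + n < N + k := by exact_mod_cast hRnk
  exact ⟨sub_pos.2 (by exact_mod_cast hkR), sub_pos.2 (by exact_mod_cast hkn), by linarith⟩

lemma cellProd_pos {N R n k : ℕ} (hk : k ≠ 0) (hkR : k < R) (hkn : k < n)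
    (hRnk : R + n < N + k) : 0 < cellProd N R n k := by
  obtain ⟨h1, h2, h3⟩ := cellProd_factors_pos hkR hkn hRnk
  rw [cellProd]
  positivity

lemma log_cellProd {N R n k : ℕ} (hk : k ≠ 0) (hkR : k < R) (hkn : k < n)
    (hRnk : R + n < N + k) :
    log (cellProd N R n k) =
      log k + log ((R : ℝ) - k) + log ((n : ℝ) - k) + log ((N : ℝ) - R - n + k) := by
  obtain ⟨h1, h2, h3⟩ := cellProd_factors_pos hkR hkn hRnk
  rw [cellProd, log_mul (by positivity) h3.ne', log_mul (by positivity) h2.ne',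
    log_mul (by positivity) h1.ne']

lemma exists_log_hypPMF_eq {N R n : ℕ} (hRN : R < N) (hnN : n < N) :
    ∃ K : ℝ, ∀ k : ℕ, k ≠ 0 → k < R → k < n → R + n < N + k →
      log (hypPMF N R n k) =
        K - Lfun N R n k - 1 / 2 * log (cellProd N R n k) - cellStirlingRem N R n k := by
  refine ⟨log R ! + log (N - R)! + log n ! + log (N - n)! - log N ! + N - 2 * log (2 * π) -
    (R * log R + (N - R) * log (N - R) + n * log n + (N - n) * log (N - n) - N * log N),
    fun k hk hkR hkn hRnk ↦ ?_⟩
  have hcast : ((N + k - R - n : ℕ) : ℝ) = N - R - n + k := by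
    rw [Nat.cast_sub (by omega), Nat.cast_sub (by omega)]; push_cast; ring
  have hk' := log_factorial_eq_add_stirlingRem hk
  have hRk := log_factorial_eq_add_stirlingRem (j := R - k) (by omega)
  have hnk := log_factorial_eq_add_stirlingRem (j := n - k) (by omega)
  have hD := log_factorial_eq_add_stirlingRem (j := N + k - R - n) (by omega)
  rw [Nat.cast_sub hkR.le] at hRk
  rw [Nat.cast_sub hkn.le] at hnk
  rw [hcast] at hD
  rw [log_hypPMF_eq hkR.le hkn.le hRN.le hnN.le hRnk.le, log_cellProd hk hkR hkn hRnk,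
    Lfun_eq (by positivity) (by exact_mod_cast hkR) (by exact_mod_cast hkn) hRN hnN
      (hcast ▸ Nat.cast_pos.2 (by omega)), cellStirlingRem]
  linear_combination -hk' - hRk - hnk - hD

lemma cellStirlingRem_sub_le {N R n a b : ℕ} (hb : b ≠ 0) (hba : b ≤ a) (haR : a < R)
    (han : a < n) (hRnb : R + n < N + b) :
    cellStirlingRem N R n b - cellStirlingRem N R n a ≤
      1 / (12 * b) + 1 / (12 * ((N : ℝ) - R - n + b)) := by
  have hcast : ((N + b - R - n : ℕ) : ℝ) = N - R - n + b := by
    rw [Nat.cast_sub (by omega), Nat.cast_sub (by omega)]; push_cast; ring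
  have hD := stirlingRem_le (j := N + b - R - n) (by omega)
  rw [hcast] at hD
  have hb' := stirlingRem_le hb
  have hR := stirlingRem_le_of_le (i := R - a) (j := R - b) (by omega) (by omega)
  have hn := stirlingRem_le_of_le (i := n - a) (j := n - b) (by omega) (by omega)
  have ha := stirlingRem_nonneg (j := a) (by omega)
  have hDa := stirlingRem_nonneg (j := N + a - R - n) (by omega)
  rw [cellStirlingRem, cellStirlingRem]
  linarith

lemma mul_div_le_sub_sub_add {N R n b : ℝ} (hN : 0 < N) (hb : n * R / N ≤ b) :
    (N - R) * (N - n) / N ≤ N - R - n + b := by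
  have : (N - R) * (N - n) / N = N - R - n + n * R / N := by field_simp; ring
  linarith

lemma one_div_add_one_div_le {N R n b : ℝ} (hR : 0 < R) (hRN : R < N) (hn : 0 < n)
    (hnN : n < N) (hb : n * R / N ≤ b) :
    1 / (12 * b) + 1 / (12 * (N - R - n + b)) ≤
      1 / (12 * (R / N) * (1 - R / N)) * (1 / n + 1 / (N - n)) := by
  have hN : 0 < N := hR.trans hRN
  have hNR : 0 < N - R := sub_pos.2 hRN
  have hNn : 0 < N - n := sub_pos.2 hnN
  have hb' : 1 / (12 * b) ≤ 1 / (12 * (n * R / N)) := by gcongr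
  have hD : 1 / (12 * (N - R - n + b)) ≤ 1 / (12 * ((N - R) * (N - n) / N)) := by
    gcongr; exact mul_div_le_sub_sub_add hN hb
  have hsum : 1 / (12 * (n * R / N)) + 1 / (12 * ((N - R) * (N - n) / N)) ≤
      1 / (12 * (R / N) * (1 - R / N)) * (1 / n + 1 / (N - n)) := by
    have hgap : 1 / (12 * (R / N) * (1 - R / N)) * (1 / n + 1 / (N - n)) -
        (1 / (12 * (n * R / N)) + 1 / (12 * ((N - R) * (N - n) / N))) =
        N * (R * (N - n) + n * (N - R)) / (12 * n * R * (N - R) * (N - n)) := by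
      field_simp
      ring
    rw [← sub_nonneg, hgap]
    exact div_nonneg (by positivity) (by positivity)
  linarith

lemma log_hypPMF_sub_le {N R n a b : ℕ} (hRN : R < N) (hnN : n < N)
    (hb : (n : ℝ) * R / N ≤ b) (hba : b ≤ a) (haR : a < R) (han : a < n) :
    log (hypPMF N R n a) - log (hypPMF N R n b) ≤
      -Lfun N R n a + Lfun N R n b + 1 / 2 * log (cellProd N R n b / cellProd N R n a) +
        1 / (12 * ((R : ℝ) / N) * (1 - (R : ℝ) / N)) *
          (1 / (n : ℝ) + 1 / ((N : ℝ) - n)) := by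
  have hR : (0 : ℝ) < R := by exact_mod_cast (a.zero_le.trans_lt haR)
  have hn : (0 : ℝ) < n := by exact_mod_cast (a.zero_le.trans_lt han)
  have hRN' : (R : ℝ) < N := by exact_mod_cast hRN
  have hnN' : (n : ℝ) < N := by exact_mod_cast hnN
  have hN : (0 : ℝ) < N := hR.trans hRN'
  have hb0 : b ≠ 0 := by
    rintro rfl
    exact (show (0 : ℝ) < n * R / N by positivity).not_ge (by simpa using hb)
  have hRnb : R + n < N + b := by
    have h := mul_div_le_sub_sub_add hN hb
    have : (0 : ℝ) < (N - R) * (N - n) / N := by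
      have := sub_pos.2 hRN'; have := sub_pos.2 hnN'; positivity
    exact_mod_cast (show (R : ℝ) + n < N + b by linarith)
  have hbR := hba.trans_lt haR
  have hbn := hba.trans_lt han
  have ha0 : a ≠ 0 := by omega
  have hRna : R + n < N + a := by omega
  obtain ⟨K, hK⟩ := exists_log_hypPMF_eq hRN hnN
  rw [hK a ha0 haR han hRna, hK b hb0 hbR hbn hRnb,
    log_div (cellProd_pos hb0 hbR hbn hRnb).ne' (cellProd_pos ha0 haR han hRna).ne']
  have hrem := cellStirlingRem_sub_le hb0 hba haR han hRnb
  have hinv := one_div_add_one_div_le hR hRN' hn hnN' hb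
  linarith

theorem hypPMF_log_ratio_bound_general (N R n : ℕ) (hRN : R < N)
    (hnN : n < N) (x : ℤ)
    (hxm : ⌈(n : ℝ) * R / N⌉ ≤ x) (hx : x < min (n : ℤ) (R : ℤ)) :
    Real.log (hypPMF N R n x) - Real.log (hypPMF N R n ⌈(n : ℝ) * R / N⌉) ≤
      -Lfun N R n (x : ℝ) + Lfun N R n ((⌈(n : ℝ) * R / N⌉ : ℤ) : ℝ) +
        1 / 2 * Real.log
          (((⌈(n : ℝ) * R / N⌉ : ℝ) * ((R : ℝ) - ⌈(n : ℝ) * R / N⌉) *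
              ((n : ℝ) - ⌈(n : ℝ) * R / N⌉) * ((N : ℝ) - R - n + ⌈(n : ℝ) * R / N⌉)) /
            ((x : ℝ) * ((R : ℝ) - x) * ((n : ℝ) - x) * ((N : ℝ) - R - n + x))) +
        1 / (12 * ((R : ℝ) / N) * (1 - (R : ℝ) / N)) * (1 / (n : ℝ) + 1 / ((N : ℝ) - n)) := by
  have hm : (n : ℝ) * R / N ≤ ⌈(n : ℝ) * R / N⌉ := Int.le_ceil _
  obtain ⟨b, hb⟩ :=
    Int.eq_ofNat_of_zero_le (Int.ceil_nonneg (by positivity : (0 : ℝ) ≤ n * R / N))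
  rw [hb] at hxm hm ⊢
  lift x to ℕ using (Int.natCast_nonneg b).trans hxm
  push_cast at hm ⊢
  exact log_hypPMF_sub_le hRN hnN hm (by omega) (by omega) (by omega)

/-- Stirling-based bound: for every integer `x` with `⌈m⌉ ≤ x < min(n, R)` where `m = nR/N`:
`log P(X = x) − log P(X = ⌈m⌉) ≤ −L(x) + L(⌈m⌉)
  + (1/2)·log((⌈m⌉(R−⌈m⌉)(n−⌈m⌉)(N−R−n+⌈m⌉))/(x(R−x)(n−x)(N−R−n+x)))
  + (1/(12·p̄·(1−p̄)))·(1/n + 1/(N−n))`. -/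
theorem hypPMF_log_ratio_bound (N R n : ℕ) (hR1 : 1 ≤ R) (hRN : R < N)
    (hn1 : 1 ≤ n) (hnN : n < N) (x : ℤ)
    (hxm : ⌈(n : ℝ) * R / N⌉ ≤ x) (hx : x < min (n : ℤ) (R : ℤ)) :
    Real.log (hypPMF N R n x) - Real.log (hypPMF N R n ⌈(n : ℝ) * R / N⌉) ≤
      -Lfun N R n (x : ℝ) + Lfun N R n ((⌈(n : ℝ) * R / N⌉ : ℤ) : ℝ) +
        1 / 2 * Real.log
          (((⌈(n : ℝ) * R / N⌉ : ℝ) * ((R : ℝ) - ⌈(n : ℝ) * R / N⌉) *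
              ((n : ℝ) - ⌈(n : ℝ) * R / N⌉) * ((N : ℝ) - R - n + ⌈(n : ℝ) * R / N⌉)) /
            ((x : ℝ) * ((R : ℝ) - x) * ((n : ℝ) - x) * ((N : ℝ) - R - n + x))) +
        1 / (12 * ((R : ℝ) / N) * (1 - (R : ℝ) / N)) * (1 / (n : ℝ) + 1 / ((N : ℝ) - n)) :=
  hypPMF_log_ratio_bound_general N R n hRN hnN x hxm hx
end

section
/- L(⌈m⌉) ≤ (1/(p̄·(1−p̄)))·(1/n + 1/(N−n)). -/
open Real

lemma mul_log_div_le_mul_div_sub_one {a b : ℝ} (ha : 0 ≤ a) (hb : 0 < b) :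
    a * log (a / b) ≤ a * (a / b - 1) := by
  rcases ha.eq_or_lt with rfl | ha
  · simp
  · exact mul_le_mul_of_nonneg_left (log_le_sub_one_of_pos (by positivity)) ha.le

lemma bernKL_le_chiSq {u p : ℝ} (hu0 : 0 ≤ u) (hu1 : u ≤ 1) (hp0 : 0 < p) (hp1 : p < 1) :
    bernKL u p ≤ (u - p) ^ 2 / (p * (1 - p)) := by
  have hq0 : 0 < 1 - p := by linarith
  have hu := mul_log_div_le_mul_div_sub_one hu0 hp0
  have hv := mul_log_div_le_mul_div_sub_one (sub_nonneg.2 hu1) hq0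
  have hchi : u * (u / p - 1) + (1 - u) * ((1 - u) / (1 - p) - 1)
      = (u - p) ^ 2 / (p * (1 - p)) := by
    field_simp
    ring
  unfold bernKL
  linarith

lemma Lfun_le_sq_dev_mul {N R n : ℕ} (hR0 : 0 < R) (hRN : R < N) (hn0 : 0 < n) (hnN : n < N)
    {x : ℝ} (hx0 : 0 ≤ x) (hxn : x ≤ n) (hxR : x ≤ R) (hxNnR : (n : ℝ) + R - N ≤ x) :
    Lfun N R n x ≤ (x - n * R / N) ^ 2 *
      (1 / ((R / N : ℝ) * (1 - R / N)) * (1 / (n : ℝ) + 1 / ((N : ℝ) - n))) := by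
  have hN : (0 : ℝ) < N := by exact_mod_cast hR0.trans hRN
  have hn : (0 : ℝ) < n := by exact_mod_cast hn0
  have hNn : (0 : ℝ) < N - n := sub_pos.2 (by exact_mod_cast hnN)
  set p : ℝ := R / N with hp
  have hp0 : 0 < p := by positivity
  have hp1 : p < 1 := (div_lt_one hN).2 (by exact_mod_cast hRN)
  have h₁ := bernKL_le_chiSq (u := x / n) (by positivity) ((div_le_one hn).2 hxn) hp0 hp1
  have h₂ := bernKL_le_chiSq (u := (R - x) / (N - n)) (div_nonneg (by linarith) hNn.le)
    ((div_le_one hNn).2 (by linarith)) hp0 hp1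
  calc Lfun N R n x
      ≤ n * ((x / n - p) ^ 2 / (p * (1 - p))) +
          (N - n) * (((R - x) / (N - n) - p) ^ 2 / (p * (1 - p))) := by
        unfold Lfun
        gcongr
    _ = (x - n * R / N) ^ 2 * (1 / (p * (1 - p)) * (1 / (n : ℝ) + 1 / ((N : ℝ) - n))) := by
        rw [hp]
        field_simp
        ring

/-- `L(⌈m⌉) ≤ (1/(p̄(1−p̄)))·(1/n + 1/(N−n))` where `m = nR/N` and `p̄ = R/N`. -/
theorem Lfun_ceil_mean_bound (N R n : ℕ) (hR1 : 1 ≤ R) (hRN : R < N)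
    (hn1 : 1 ≤ n) (hnN : n < N) :
    Lfun N R n ((⌈(n : ℝ) * R / N⌉ : ℤ) : ℝ) ≤
      1 / (((R : ℝ) / N) * (1 - (R : ℝ) / N)) * (1 / (n : ℝ) + 1 / ((N : ℝ) - n)) := by
  have hN : (0 : ℝ) < N := by exact_mod_cast (Nat.zero_lt_of_lt hRN)
  have hRN' : (R : ℝ) ≤ N := by exact_mod_cast hRN.le
  have hnN' : (n : ℝ) ≤ N := by exact_mod_cast hnN.le
  set m : ℝ := n * R / N
  have hm0 : 0 ≤ m := by positivity
  have hmn : m ≤ n := (div_le_iff₀ hN).2 (by nlinarith)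
  have hmR : m ≤ R := (div_le_iff₀ hN).2 (by nlinarith)
  have hmlow : (n : ℝ) + R - N ≤ m := (le_div_iff₀ hN).2 (by nlinarith)
  have hceil_n : (⌈m⌉ : ℝ) ≤ n := by exact_mod_cast Int.ceil_le.2 (by exact_mod_cast hmn)
  have hceil_R : (⌈m⌉ : ℝ) ≤ R := by exact_mod_cast Int.ceil_le.2 (by exact_mod_cast hmR)
  have hδ0 : 0 ≤ (⌈m⌉ : ℝ) - m := sub_nonneg.2 (Int.le_ceil m)
  have hδ1 : (⌈m⌉ : ℝ) - m ≤ 1 := by linarith [Int.ceil_lt_add_one m]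
  have hbound_nonneg :
      0 ≤ 1 / ((R / N : ℝ) * (1 - R / N)) * (1 / (n : ℝ) + 1 / ((N : ℝ) - n)) := by
    have hp1 : (R / N : ℝ) ≤ 1 := (div_le_one hN).2 hRN'
    have hNn : (0 : ℝ) ≤ N - n := sub_nonneg.2 hnN'
    have : 0 ≤ 1 - (R / N : ℝ) := sub_nonneg.2 hp1
    positivity
  refine (Lfun_le_sq_dev_mul (by omega) hRN (by omega) hnN (by linarith) hceil_n hceil_R
    (by linarith)).trans (mul_le_of_le_one_left hbound_nonneg ?_)
  nlinarith
end

section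
/- The function x ↦ L(x) is strictly decreasing for x below m and strictly increasing for x above m: for all reals x₁, x₂ with max(0, n+R−N) ≤ x₁ < x₂ ≤ m one has L(x₁) > L(x₂), and for all reals x₁, x₂ with m ≤ x₁ < x₂ ≤ min(n, R) one has L(x₁) < L(x₂). -/
open Real Set InformationTheory

section ConvexMinimum

variable {𝕜 : Type*} [Field 𝕜] [LinearOrder 𝕜] [IsStrictOrderedRing 𝕜] {s : Set 𝕜} {f : 𝕜 → 𝕜}
  {m : 𝕜}

theorem ConvexOn.strictMonoOn_inter_Ici_of_lt (hf : ConvexOn 𝕜 s f) (hm : m ∈ s)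
    (hmin : ∀ y ∈ s, m < y → f m < f y) : StrictMonoOn f (s ∩ Ici m) := by
  intro u hu v hv huv
  rcases eq_or_lt_of_le hu.2 with rfl | hmu
  · exact hmin v hv.1 huv
  · exact hf.strictMonoOn hm hmu (hmin u hu.1 hmu) ⟨hu.1, le_rfl⟩ ⟨hv.1, huv.le⟩ huv

theorem ConvexOn.strictAntiOn_inter_Iic_of_lt (hf : ConvexOn 𝕜 s f) (hm : m ∈ s)
    (hmin : ∀ y ∈ s, y < m → f m < f y) : StrictAntiOn f (s ∩ Iic m) := by
  intro u hu v hv huv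
  rcases eq_or_lt_of_le hv.2 with rfl | hvm
  · exact hmin u hu.1 huv
  · exact hf.strictAntiOn hm hvm (hmin v hv.1 hvm) ⟨hu.1, huv.le⟩ ⟨hv.1, le_rfl⟩ huv

end ConvexMinimum

theorem ConvexOn.comp_mul_add {𝕜 β : Type*} [Field 𝕜] [LinearOrder 𝕜] [IsStrictOrderedRing 𝕜]
    [AddCommMonoid β] [PartialOrder β] [SMul 𝕜 β] {s : Set 𝕜} {f : 𝕜 → β}
    (hf : ConvexOn 𝕜 s f) (c d : 𝕜) :
    ConvexOn 𝕜 ((fun x ↦ c * x + d) ⁻¹' s) (fun x ↦ f (c * x + d)) :=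
  hf.comp_affineMap ((LinearMap.lsmul 𝕜 𝕜 c).toAffineMap + AffineMap.const 𝕜 𝕜 d)

section BernoulliKL

variable {p u : ℝ}

theorem bernKL_eq_klFun (hp0 : p ≠ 0) (hp1 : 1 - p ≠ 0) (u : ℝ) :
    bernKL u p = p * klFun (u / p) + (1 - p) * klFun ((1 - u) / (1 - p)) := by
  simp only [bernKL, klFun]
  field_simp
  ring

theorem bernKL_self (hp0 : p ≠ 0) (hp1 : 1 - p ≠ 0) : bernKL p p = 0 := by
  simp [bernKL, div_self hp0, div_self hp1]

theorem convexOn_bernKL (hp0 : 0 < p) (hp1 : p < 1) : ConvexOn ℝ (Icc 0 1) (bernKL · p) := by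
  have hq : 0 < 1 - p := sub_pos.2 hp1
  have h₁ := (convexOn_klFun.comp_mul_add p⁻¹ 0).smul hp0.le
  have h₂ := (convexOn_klFun.comp_mul_add (-(1 - p)⁻¹) (1 - p)⁻¹).smul hq.le
  refine ((h₁.subset ?_ (convex_Icc 0 1)).add (h₂.subset ?_ (convex_Icc 0 1))).congr ?_
  · intro u hu
    rw [mem_preimage, mem_Ici, add_zero]
    exact mul_nonneg (inv_nonneg.2 hp0.le) hu.1
  · intro u hu
    rw [mem_preimage, mem_Ici, show -(1 - p)⁻¹ * u + (1 - p)⁻¹ = (1 - u) / (1 - p) by ring]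
    exact div_nonneg (sub_nonneg.2 hu.2) hq.le
  · intro u _
    simp only [Pi.add_apply, smul_eq_mul, add_zero, bernKL_eq_klFun hp0.ne' hq.ne']
    rw [div_eq_inv_mul, show (1 - u) / (1 - p) = -(1 - p)⁻¹ * u + (1 - p)⁻¹ by ring]

theorem bernKL_pos (hp0 : 0 < p) (hp1 : p < 1) (hu0 : 0 ≤ u) (hu1 : u ≤ 1) (hup : u ≠ p) :
    0 < bernKL u p := by
  have hq : 0 < 1 - p := sub_pos.2 hp1
  have hne : klFun (u / p) ≠ 0 := by
    rw [Ne, klFun_eq_zero_iff (by positivity), div_eq_one_iff_eq hp0.ne']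
    exact hup
  rw [bernKL_eq_klFun hp0.ne' hq.ne']
  have h₁ : 0 < klFun (u / p) := (klFun_nonneg (by positivity)).lt_of_ne' hne
  have h₂ : 0 ≤ klFun ((1 - u) / (1 - p)) := klFun_nonneg (div_nonneg (sub_nonneg.2 hu1) hq.le)
  positivity

theorem bernKL_nonneg (hp0 : 0 < p) (hp1 : p < 1) (hu0 : 0 ≤ u) (hu1 : u ≤ 1) :
    0 ≤ bernKL u p := by
  rcases eq_or_ne u p with rfl | hup
  · exact (bernKL_self hp0.ne' (sub_pos.2 hp1).ne').ge
  · exact (bernKL_pos hp0 hp1 hu0 hu1 hup).le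

end BernoulliKL

section Hypergeometric

variable {N R n : ℕ}

/-- The interval spanned by the support of the hypergeometric law. -/
def hypSupportIcc (N R n : ℕ) : Set ℝ := Icc (max 0 ((n : ℝ) + R - N)) (min (n : ℝ) R)

theorem natCast_div_mem_Ioo (hR : 0 < R) (hRN : R < N) : (R : ℝ) / N ∈ Ioo 0 1 := by
  have hR' : (0 : ℝ) < R := by exact_mod_cast hR
  have hRN' : (R : ℝ) < N := by exact_mod_cast hRN
  exact ⟨div_pos hR' (hR'.trans hRN'), (div_lt_one (hR'.trans hRN')).2 hRN'⟩

theorem mean_mem_hypSupportIcc (hRN : R < N) (hnN : n < N) :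
    (n : ℝ) * R / N ∈ hypSupportIcc N R n := by
  have hRN' : (R : ℝ) < N := by exact_mod_cast hRN
  have hnN' : (n : ℝ) < N := by exact_mod_cast hnN
  have hN : (0 : ℝ) < N := by linarith [(Nat.cast_nonneg R : (0 : ℝ) ≤ R)]
  refine ⟨max_le (by positivity) ?_, le_min ?_ ?_⟩ <;> rw [← sub_nonneg]
  · have : (n : ℝ) * R / N - (n + R - N) = (N - n) * (N - R) / N := by field_simp; ring
    rw [this]
    exact div_nonneg (mul_nonneg (by linarith) (by linarith)) hN.le
  · have : (n : ℝ) - n * R / N = n * (N - R) / N := by field_simp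
    rw [this]
    exact div_nonneg (mul_nonneg (by positivity) (by linarith)) hN.le
  · have : (R : ℝ) - n * R / N = R * (N - n) / N := by field_simp
    rw [this]
    exact div_nonneg (mul_nonneg (by positivity) (by linarith)) hN.le

theorem div_mem_Icc_of_mem_hypSupportIcc (hn : 0 < n) (hnN : n < N) {x : ℝ}
    (hx : x ∈ hypSupportIcc N R n) :
    x / n ∈ Icc (0 : ℝ) 1 ∧ ((R : ℝ) - x) / ((N : ℝ) - n) ∈ Icc (0 : ℝ) 1 := by
  obtain ⟨hlo, hhi⟩ := hx
  rw [max_le_iff] at hlo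
  rw [le_min_iff] at hhi
  have hn' : (0 : ℝ) < n := by exact_mod_cast hn
  have hNn : (0 : ℝ) < N - n := sub_pos.2 (by exact_mod_cast hnN)
  refine ⟨⟨div_nonneg hlo.1 hn'.le, (div_le_one hn').2 hhi.1⟩,
    ⟨div_nonneg (by linarith) hNn.le, (div_le_one hNn).2 (by linarith)⟩⟩

theorem Lfun_mean_eq_zero (hR : 0 < R) (hRN : R < N) (hn : 0 < n) (hnN : n < N) :
    Lfun N R n ((n : ℝ) * R / N) = 0 := by
  obtain ⟨hp0, hp1⟩ := natCast_div_mem_Ioo hR hRN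
  have hn' : (n : ℝ) ≠ 0 := by positivity
  have hN : (N : ℝ) ≠ 0 := Nat.cast_ne_zero.2 (by omega)
  have hNn : (N : ℝ) - n ≠ 0 := (sub_pos.2 (by exact_mod_cast hnN)).ne'
  have h₁ : (n : ℝ) * R / N / n = R / N := by field_simp
  have h₂ : ((R : ℝ) - n * R / N) / (N - n) = R / N := by field_simp
  simp only [Lfun, h₁, h₂, bernKL_self hp0.ne' (sub_pos.2 hp1).ne', mul_zero, add_zero]

theorem Lfun_pos (hR : 0 < R) (hRN : R < N) (hn : 0 < n) (hnN : n < N) {x : ℝ}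
    (hx : x ∈ hypSupportIcc N R n) (hxm : x ≠ n * R / N) : 0 < Lfun N R n x := by
  obtain ⟨hp0, hp1⟩ := natCast_div_mem_Ioo hR hRN
  obtain ⟨hp, hq⟩ := div_mem_Icc_of_mem_hypSupportIcc hn hnN hx
  have hn' : (0 : ℝ) < n := by exact_mod_cast hn
  have hNn : (0 : ℝ) < N - n := sub_pos.2 (by exact_mod_cast hnN)
  have hne : x / n ≠ R / N := by
    intro h
    apply hxm
    rw [div_eq_iff hn'.ne'] at h
    rw [h]
    ring
  exact add_pos_of_pos_of_nonneg (mul_pos hn' (bernKL_pos hp0 hp1 hp.1 hp.2 hne))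
    (mul_nonneg hNn.le (bernKL_nonneg hp0 hp1 hq.1 hq.2))

theorem convexOn_Lfun (hR : 0 < R) (hRN : R < N) (hn : 0 < n) (hnN : n < N) :
    ConvexOn ℝ (hypSupportIcc N R n) (Lfun N R n) := by
  obtain ⟨hp0, hp1⟩ := natCast_div_mem_Ioo hR hRN
  have hn' : (0 : ℝ) < n := by exact_mod_cast hn
  have hNn : (0 : ℝ) < N - n := sub_pos.2 (by exact_mod_cast hnN)
  have h₁ := ((convexOn_bernKL hp0 hp1).comp_mul_add (n : ℝ)⁻¹ 0).smul hn'.le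
  have h₂ := ((convexOn_bernKL hp0 hp1).comp_mul_add (-((N : ℝ) - n)⁻¹)
    (R / ((N : ℝ) - n))).smul hNn.le
  have hconv : Convex ℝ (hypSupportIcc N R n) := convex_Icc _ _
  refine ((h₁.subset ?_ hconv).add (h₂.subset ?_ hconv)).congr ?_
  · intro x hx
    rw [mem_preimage, add_zero, inv_mul_eq_div]
    exact (div_mem_Icc_of_mem_hypSupportIcc hn hnN hx).1
  · intro x hx
    rw [mem_preimage, show -((N : ℝ) - n)⁻¹ * x + R / (N - n) = (R - x) / (N - n) by ring]
    exact (div_mem_Icc_of_mem_hypSupportIcc hn hnN hx).2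
  · intro x _
    simp only [Pi.add_apply, smul_eq_mul, add_zero, Lfun]
    rw [div_eq_inv_mul x,
      show ((R : ℝ) - x) / (N - n) = -((N : ℝ) - n)⁻¹ * x + R / (N - n) by ring]

end Hypergeometric

/-- The function `x ↦ L(x)` is strictly decreasing for `x` below `m = nR/N` and strictly
increasing for `x` above `m`. -/
theorem Lfun_strict_mono (N R n : ℕ) (hR1 : 1 ≤ R) (hRN : R < N)
    (hn1 : 1 ≤ n) (hnN : n < N) :
    (∀ x₁ x₂ : ℝ, max 0 ((n : ℝ) + R - N) ≤ x₁ → x₁ < x₂ → x₂ ≤ (n : ℝ) * R / N →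
      Lfun N R n x₂ < Lfun N R n x₁) ∧
    (∀ x₁ x₂ : ℝ, (n : ℝ) * R / N ≤ x₁ → x₁ < x₂ → x₂ ≤ min (n : ℝ) (R : ℝ) →
      Lfun N R n x₁ < Lfun N R n x₂) := by
  have hconv := convexOn_Lfun hR1 hRN hn1 hnN
  have hm := mean_mem_hypSupportIcc hRN hnN
  have hmin : ∀ y ∈ hypSupportIcc N R n, y ≠ n * R / N →
      Lfun N R n (n * R / N) < Lfun N R n y :=
    fun y hy hne ↦ (Lfun_mean_eq_zero hR1 hRN hn1 hnN).symm ▸ Lfun_pos hR1 hRN hn1 hnN hy hne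
  have hanti := hconv.strictAntiOn_inter_Iic_of_lt hm fun y hy h ↦ hmin y hy h.ne
  have hmono := hconv.strictMonoOn_inter_Ici_of_lt hm fun y hy h ↦ hmin y hy h.ne'
  refine ⟨fun x₁ x₂ h₁ h₁₂ h₂ ↦ ?_, fun x₁ x₂ h₁ h₁₂ h₂ ↦ ?_⟩
  · exact hanti ⟨⟨h₁, (h₁₂.le.trans h₂).trans hm.2⟩, h₁₂.le.trans h₂⟩
      ⟨⟨h₁.trans h₁₂.le, h₂.trans hm.2⟩, h₂⟩ h₁₂
  · exact hmono ⟨⟨hm.1.trans h₁, h₁₂.le.trans h₂⟩, h₁⟩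
      ⟨⟨hm.1.trans (h₁.trans h₁₂.le), h₂⟩, h₁.trans h₁₂.le⟩ h₁₂
end

section
/- For every integer M ≥ 1, every p̄ ∈ (0,1) and every real u with 1/M ≤ u ≤ p̄: M·K(u, p̄) + 1 ≥ p̄/(4·u). -/
/-!
Put `t = p̄ / u`. Bounding the second summand of `K(u, p̄)` by Gibbs' inequality
`a log (a / b) ≥ a - b` gives `K(u, p̄) ≥ u (t - 1 - log t)`. Since `M u ≥ 1` and
`t - 1 - log t ≥ 0`, this yields `M K(u, p̄) ≥ t - 1 - log t ≥ t / 2 - 1`, using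
`log t ≤ t / 2` (a consequence of `log 2 < 1`).
-/

open Real

lemma Real.log_le_self_div_two {x : ℝ} (hx : 0 < x) : log x ≤ x / 2 := by
  have hhalf : log (x / 2) ≤ x / 2 - 1 := log_le_sub_one_of_pos (by positivity)
  have htwo : log 2 < 1 := by linarith [log_two_lt_d9]
  rw [log_div hx.ne' two_ne_zero] at hhalf
  linarith

lemma Real.sub_le_mul_log_div {a b : ℝ} (ha : 0 < a) (hb : 0 < b) :
    a - b ≤ a * log (a / b) := by
  have h := one_sub_inv_le_log_of_pos (div_pos ha hb)
  calc a - b = a * (1 - (a / b)⁻¹) := by field_simp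
    _ ≤ a * log (a / b) := mul_le_mul_of_nonneg_left h ha.le

lemma mul_sub_one_sub_log_le_bernKL {u p : ℝ} (hu₀ : 0 < u) (hu₁ : u < 1) (hp₁ : p < 1) :
    u * (p / u - 1 - log (p / u)) ≤ bernKL u p := by
  have hgibbs : (1 - u) - (1 - p) ≤ (1 - u) * log ((1 - u) / (1 - p)) :=
    sub_le_mul_log_div (by linarith) (by linarith)
  have hfirst : u * log (u / p) = -(u * log (p / u)) := by
    rw [← inv_div p u, log_inv]; ring
  have hlin : u * (p / u - 1) = (1 - u) - (1 - p) := by field_simp; ring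
  unfold bernKL
  linarith

/-- For every integer `M ≥ 1`, `p̄ ∈ (0,1)` and real `u` with `1/M ≤ u ≤ p̄`:
`M·K(u, p̄) + 1 ≥ p̄/(4u)`. -/
theorem bernKL_lower_lower_tail (M : ℕ) (hM : 1 ≤ M) (p u : ℝ) (hp : p ∈ Set.Ioo (0 : ℝ) 1)
    (hu1 : 1 / (M : ℝ) ≤ u) (hup : u ≤ p) :
    p / (4 * u) ≤ (M : ℝ) * bernKL u p + 1 := by
  obtain ⟨hp₀, hp₁⟩ := hp
  have hM₀ : (0 : ℝ) < M := by exact_mod_cast hM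
  have hu₀ : 0 < u := (one_div_pos.mpr hM₀).trans_le hu1
  have hMu : 1 ≤ (M : ℝ) * u := by rwa [div_le_iff₀ hM₀, mul_comm] at hu1
  set t := p / u
  have ht : 0 < t := div_pos hp₀ hu₀
  have hgap : 0 ≤ t - 1 - log t := by linarith [log_le_sub_one_of_pos ht]
  have hK := mul_sub_one_sub_log_le_bernKL hu₀ (hup.trans_lt hp₁) hp₁
  calc p / (4 * u) = t / 4 := by ring
    _ ≤ t - 1 - log t + 1 := by linarith [log_le_self_div_two ht]
    _ ≤ ((M : ℝ) * u) * (t - 1 - log t) + 1 := by gcongr; exact le_mul_of_one_le_left hgap hMu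
    _ ≤ (M : ℝ) * bernKL u p + 1 := by
        rw [mul_assoc]; gcongr
end

section
/- Let N > n ≥ 1 be integers and let p̂, q̂ be reals with 0 < q̂ ≤ p̂ < 1. Set p̄ := (n·p̂ + (N−n)·q̂)/N. Then n·K(p̂, p̄) + (N−n)·K(q̂, p̄) ≥ (n·(N−n)/N)·(p̂−q̂)²/(2·p̂·(1−q̂)). -/
/-!
Two elementary bounds on `log w` for `w ≥ 1`, namely `2(w - 1)/(w + 1) ≤ log w ≤ (w - w⁻¹)/2`,
give the one-sided Pinsker bound `(u - p)² / (2u(1 - p)) ≤ K(u, p)` for `0 < p ≤ u < 1`, and by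
the symmetry `K(1 - u, 1 - p) = K(u, p)` also `(p - u)² / (2p(1 - u)) ≤ K(u, p)` for `u ≤ p`.
The mixture `p̄` lies between `q̂` and `p̂`, so both denominators can be enlarged to
`2p̂(1 - q̂)`, and the weighted sum of squares collapses:
`n (p̂ - p̄)² + (N - n)(p̄ - q̂)² = n(N - n)/N · (p̂ - q̂)²`.
-/

open Real

namespace Real

theorem log_le_sub_inv_div_two {w : ℝ} (hw : 1 ≤ w) : log w ≤ (w - w⁻¹) / 2 := by
  rw [← sinh_log (by linarith)]
  exact self_le_sinh_iff.2 (log_nonneg hw)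

theorem two_mul_sub_one_div_add_one_le_log {w : ℝ} (hw : 1 ≤ w) :
    2 * (w - 1) / (w + 1) ≤ log w := by
  have h := le_log_one_add_of_nonneg (sub_nonneg.2 hw)
  rwa [add_sub_cancel, show w - 1 + 2 = w + 1 by ring] at h

end Real

theorem bernKL_one_sub_one_sub (u p : ℝ) : bernKL (1 - u) (1 - p) = bernKL u p := by
  simp only [bernKL, sub_sub_cancel]
  ring

theorem sq_sub_div_le_bernKL_of_le {u p : ℝ} (hp : 0 < p) (hpu : p ≤ u) (hu : u < 1) :
    (u - p) ^ 2 / (2 * u * (1 - p)) ≤ bernKL u p := by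
  have hu0 : 0 < u := hp.trans_le hpu
  have h1u : 0 < 1 - u := by linarith
  have h1p : 0 < 1 - p := by linarith
  have hfirst : 2 * u * (u - p) / (u + p) ≤ u * log (u / p) := by
    have h := two_mul_sub_one_div_add_one_le_log ((one_le_div hp).2 hpu)
    calc 2 * u * (u - p) / (u + p) = u * (2 * (u / p - 1) / (u / p + 1)) := by
          field_simp
      _ ≤ u * log (u / p) := mul_le_mul_of_nonneg_left h hu0.le
  have hsecond :
      -((u - p) * (2 - u - p) / (2 * (1 - p))) ≤ (1 - u) * log ((1 - u) / (1 - p)) := by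
    have h := log_le_sub_inv_div_two ((one_le_div h1u).2 (by linarith : 1 - u ≤ 1 - p))
    rw [← inv_div (1 - p), log_inv]
    calc -((u - p) * (2 - u - p) / (2 * (1 - p)))
        = -((1 - u) * (((1 - p) / (1 - u) - ((1 - p) / (1 - u))⁻¹) / 2)) := by
          field_simp
          ring
      _ ≤ (1 - u) * -log ((1 - p) / (1 - u)) := by
          rw [mul_neg, neg_le_neg_iff]
          exact mul_le_mul_of_nonneg_left h h1u.le
  -- the two bounds add up to `(u - p)² / (u + p) + (u - p)² / (2(1 - p))`
  have hgap : 0 ≤ 2 * u * (u - p) / (u + p) - (u - p) * (2 - u - p) / (2 * (1 - p))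
      - (u - p) ^ 2 / (2 * u * (1 - p)) := by
    have hexpr : 2 * u * (u - p) / (u + p) - (u - p) * (2 - u - p) / (2 * (1 - p))
        - (u - p) ^ 2 / (2 * u * (1 - p)) = (u - p) ^ 3 * (1 + u) / (2 * u * (1 - p) * (u + p)) := by
      field_simp
      ring
    rw [hexpr]
    have : 0 ≤ u - p := sub_nonneg.2 hpu
    positivity
  rw [bernKL]
  linarith

theorem sq_sub_div_le_bernKL_of_ge {u p : ℝ} (hu : 0 < u) (hup : u ≤ p) (hp : p < 1) :
    (p - u) ^ 2 / (2 * p * (1 - u)) ≤ bernKL u p := by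
  have h := sq_sub_div_le_bernKL_of_le (u := 1 - u) (p := 1 - p) (by linarith) (by linarith)
    (by linarith)
  rwa [bernKL_one_sub_one_sub, sub_sub_sub_cancel_left, sub_sub_cancel, mul_right_comm] at h

theorem le_weighted_bernKL_mixture {a b p q : ℝ} (ha : 0 ≤ a) (hb : 0 ≤ b) (hab : 0 < a + b)
    (hq : 0 < q) (hqp : q ≤ p) (hp : p < 1) :
    a * b / (a + b) * (p - q) ^ 2 / (2 * p * (1 - q)) ≤
      a * bernKL p ((a * p + b * q) / (a + b)) + b * bernKL q ((a * p + b * q) / (a + b)) := by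
  set r := (a * p + b * q) / (a + b) with hr
  have hqr : q ≤ r := by
    rw [hr, le_div_iff₀ hab]
    nlinarith
  have hrp : r ≤ p := by
    rw [hr, div_le_iff₀ hab]
    nlinarith
  have hp0 : 0 < p := hq.trans_le hqp
  have hD : 0 < 2 * p * (1 - q) := by nlinarith
  have hKp : (p - r) ^ 2 / (2 * p * (1 - q)) ≤ bernKL p r :=
    (div_le_div_of_nonneg_left (sq_nonneg _) (by nlinarith) (by nlinarith)).trans
      (sq_sub_div_le_bernKL_of_le (hq.trans_le hqr) hrp hp)
  have hKq : (r - q) ^ 2 / (2 * p * (1 - q)) ≤ bernKL q r :=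
    (div_le_div_of_nonneg_left (sq_nonneg _) (by nlinarith) (by nlinarith)).trans
      (sq_sub_div_le_bernKL_of_ge hq hqr (hrp.trans_lt hp))
  have hsq : a * (p - r) ^ 2 + b * (r - q) ^ 2 = a * b / (a + b) * (p - q) ^ 2 := by
    rw [hr]
    field_simp
    ring
  calc a * b / (a + b) * (p - q) ^ 2 / (2 * p * (1 - q))
      = a * ((p - r) ^ 2 / (2 * p * (1 - q))) + b * ((r - q) ^ 2 / (2 * p * (1 - q))) := by
        rw [← hsq]
        ring
    _ ≤ a * bernKL p r + b * bernKL q r := by gcongr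

theorem bernKL_two_sample_lower_general (N n : ℕ) (hnN : n < N)
    (phat qhat : ℝ) (hq : 0 < qhat) (hqp : qhat ≤ phat) (hp : phat < 1) :
    (n : ℝ) * ((N : ℝ) - n) / N * (phat - qhat) ^ 2 / (2 * phat * (1 - qhat)) ≤
      (n : ℝ) * bernKL phat (((n : ℝ) * phat + ((N : ℝ) - n) * qhat) / N) +
        ((N : ℝ) - n) * bernKL qhat (((n : ℝ) * phat + ((N : ℝ) - n) * qhat) / N) := by
  have hnN' : (n : ℝ) < N := by exact_mod_cast hnN
  have h := le_weighted_bernKL_mixture (a := n) (b := N - n) (Nat.cast_nonneg n)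
    (sub_nonneg.2 hnN'.le) (by simpa using (Nat.cast_nonneg n).trans_lt hnN') hq hqp hp
  rwa [add_sub_cancel] at h

/-- Let `N > n ≥ 1` be integers and `0 < q̂ ≤ p̂ < 1` be reals; set
`p̄ := (n·p̂ + (N−n)·q̂)/N`.  Then
`n·K(p̂, p̄) + (N−n)·K(q̂, p̄) ≥ (n(N−n)/N)·(p̂−q̂)²/(2p̂(1−q̂))`. -/
theorem bernKL_two_sample_lower (N n : ℕ) (hn : 1 ≤ n) (hnN : n < N)
    (phat qhat : ℝ) (hq : 0 < qhat) (hqp : qhat ≤ phat) (hp : phat < 1) :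
    (n : ℝ) * ((N : ℝ) - n) / N * (phat - qhat) ^ 2 / (2 * phat * (1 - qhat)) ≤
      (n : ℝ) * bernKL phat (((n : ℝ) * phat + ((N : ℝ) - n) * qhat) / N) +
        ((N : ℝ) - n) * bernKL qhat (((n : ℝ) * phat + ((N : ℝ) - n) * qhat) / N) :=
  bernKL_two_sample_lower_general N n hnN phat qhat hq hqp hp
end
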